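/- arXiv:1508.00095 — 3 statements merged into one kernel-verified Lean document; each statement's English description precedes it below -/
import Mathlib

section
/- Let p be a prime, π a finite p-group, and R a semilocal Dedekind domain with char R = p. Then every finitely generated projective Rπ-module is a free Rπ-module. -/
/-!
Let `ε : Rπ → R` be the augmentation and `I = ker ε`; the point is that `I` is nilpotent. Over
`𝔽_p`, a `p`-group acting on a nonzero finite `𝔽_pπ`-module `M` fixes some `x ≠ 0`, and `I` kills
`x`, so induction on `|M|` gives `I^n M = 0`. Over `R`, `I` is the `R`-span of the images of the
elements `g - 1` of `𝔽_pπ`, so `I^n = 0` there as well.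

If `P` is projective, then `P / I P` embeds in a free `R`-module, so it is torsion-free and, `R`
being a PID (a semilocal Dedekind domain), free when `P` is finitely generated. Lifting a basis of
`P / I P` gives a map `f : Rπ^(ι) → P` that is an isomorphism modulo `I`. Nakayama's lemma for
the nilpotent ideal `I` makes `f` surjective; then `f` splits, so `K = ker f` satisfies
`K ⊆ I K`, whence `K = 0`.
-/

section Nilpotent

variable {A M M' : Type*} [Ring A] [AddCommGroup M] [Module A M] [AddCommGroup M'] [Module A M']
  {I : Ideal A} {n : ℕ}

theorem Submodule.eq_top_of_sup_smul_top_eq_top_of_pow_eq_bot (hI : I ^ n = ⊥)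
    {N : Submodule A M} (h : N ⊔ I • ⊤ = ⊤) : N = ⊤ := by
  have key : ∀ k, N ⊔ I ^ k • ⊤ = ⊤ := by
    intro k
    induction k with
    | zero => rw [Submodule.pow_zero, Ideal.one_eq_top, top_smul, sup_top_eq]
    | succ k ih =>
      refine top_unique ?_
      calc ⊤ = N ⊔ I ^ k • (N ⊔ I • ⊤) := by rw [h, ih]
        _ ≤ N ⊔ I ^ (k + 1) • ⊤ := by
          rw [smul_sup, Submodule.pow_succ, Submodule.mul_smul, ← sup_assoc]
          exact sup_le_sup_right (sup_le le_rfl smul_le_right) _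
  simpa [hI] using key n

theorem Submodule.eq_bot_of_le_smul_of_pow_eq_bot (hI : I ^ n = ⊥) {N : Submodule A M}
    (h : N ≤ I • N) : N = ⊥ := by
  have key : ∀ k, N ≤ I ^ k • N := by
    intro k
    induction k with
    | zero => rw [Submodule.pow_zero, Ideal.one_eq_top, top_smul]
    | succ k ih =>
      calc N ≤ I ^ k • N := ih
        _ ≤ I ^ k • I • N := smul_mono_right _ h
        _ = I ^ (k + 1) • N := by rw [Submodule.pow_succ, Submodule.mul_smul]
  simpa [hI] using key n

theorem LinearMap.ker_le_smul_ker_of_le_smul_top [Module.Projective A M'] {f : M →ₗ[A] M'}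
    (hf : Function.Surjective f) (h : ker f ≤ I • ⊤) : ker f ≤ I • ker f := by
  obtain ⟨s, hs⟩ := Module.projective_lifting_property f LinearMap.id hf
  set q := LinearMap.id - s ∘ₗ f
  have hq : range q ≤ ker f := by
    rintro _ ⟨x, rfl⟩
    simp [q, ← LinearMap.comp_apply f s, hs]
  intro x hx
  have hqx : q x = x := by simp [q, LinearMap.mem_ker.mp hx]
  have : q x ∈ (I • ⊤ : Submodule A M).map q := Submodule.mem_map_of_mem (h hx)
  rw [Submodule.map_smul'', Submodule.map_top, hqx] at this
  exact smul_mono_right _ hq this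

theorem LinearMap.bijective_of_pow_eq_bot [Module.Projective A M'] (hI : I ^ n = ⊥)
    {f : M →ₗ[A] M'} (hsurj : range f ⊔ I • ⊤ = ⊤)
    (hinj : (I • ⊤ : Submodule A M').comap f ≤ I • ⊤) : Function.Bijective f := by
  have hf : Function.Surjective f :=
    range_eq_top.mp (Submodule.eq_top_of_sup_smul_top_eq_top_of_pow_eq_bot hI hsurj)
  refine ⟨ker_eq_bot.mp ?_, hf⟩
  exact Submodule.eq_bot_of_le_smul_of_pow_eq_bot hI
    (ker_le_smul_ker_of_le_smul_top hf ((Submodule.comap_mono bot_le).trans hinj))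

end Nilpotent

theorem Finsupp.mem_smul_top_iff {A ι : Type*} [Ring A] (I : Ideal A) [I.IsTwoSided]
    (c : ι →₀ A) : c ∈ I • (⊤ : Submodule A (ι →₀ A)) ↔ ∀ i, c i ∈ I := by
  refine ⟨fun hc i => ?_, fun hc => ?_⟩
  · exact Submodule.smul_induction_on (p := fun c : ι →₀ A => c i ∈ I) hc
      (fun a ha d _ => I.mul_mem_right _ ha) (fun _ _ => I.add_mem)
  · rw [← c.sum_single]
    refine Submodule.sum_mem _ fun i _ => ?_
    rw [← mul_one (c i), ← smul_eq_mul, ← Finsupp.smul_single]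
    exact Submodule.smul_mem_smul (hc i) Submodule.mem_top

section Augmentation

variable {R A : Type*} [CommRing R] [Ring A] [Algebra R A] (ε : A →ₐ[R] R)
  {M : Type*} [AddCommGroup M] [Module A M] [Module R M] [IsScalarTower R A M]

theorem Submodule.Quotient.mk_smul_ker_smul_top (a : A) (x : M) :
    (Submodule.Quotient.mk (a • x) : M ⧸ RingHom.ker ε • (⊤ : Submodule A M)) =
      ε a • Submodule.Quotient.mk x := by
  rw [← algebraMap_smul A, ← Submodule.Quotient.mk_smul, Submodule.Quotient.eq, ← sub_smul]
  exact Submodule.smul_mem_smul (by simp [RingHom.mem_ker]) Submodule.mem_top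

theorem Module.isTorsionFree_quotient_ker_smul_top [IsDomain R] [Module.Projective A M] :
    Module.IsTorsionFree R (M ⧸ RingHom.ker ε • (⊤ : Submodule A M)) := by
  obtain ⟨s, hs⟩ := Module.projective_def'.mp ‹Module.Projective A M›
  refine .of_smul_eq_zero fun r q hrq => ?_
  obtain ⟨x, rfl⟩ := Submodule.Quotient.mk_surjective _ q
  rw [← Submodule.Quotient.mk_smul, Submodule.Quotient.mk_eq_zero] at hrq
  have hsx (i : M) : r * ε (s x i) = 0 := by
    have hi := (Finsupp.mem_smul_top_iff _ _).mp (Submodule.smul_top_le_comap_smul_top _ s hrq) i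
    rwa [← algebraMap_smul A r x, map_smul, Finsupp.smul_apply, smul_eq_mul, RingHom.mem_ker,
      map_mul, AlgHom.commutes, Algebra.algebraMap_self, RingHom.id_apply] at hi
  by_cases hr : r = 0
  · exact Or.inl hr
  refine Or.inr ((Submodule.Quotient.mk_eq_zero _).mpr ?_)
  have hsx' : s x ∈ RingHom.ker ε • ⊤ := (Finsupp.mem_smul_top_iff _ _).mpr fun i =>
    (mul_eq_zero.mp (hsx i)).resolve_left hr
  simpa [← LinearMap.comp_apply, hs] using
    Submodule.smul_top_le_comap_smul_top _ (Finsupp.linearCombination A id) hsx'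

theorem Module.free_of_free_quotient_ker_smul_top [Module.Projective A M] {n : ℕ}
    (hI : RingHom.ker ε ^ n = ⊥) [Module.Free R (M ⧸ RingHom.ker ε • (⊤ : Submodule A M))] :
    Module.Free A M := by
  let b := Module.Free.chooseBasis R (M ⧸ RingHom.ker ε • (⊤ : Submodule A M))
  choose y hy using fun i => Submodule.Quotient.mk_surjective _ (b i)
  let f := Finsupp.linearCombination A y
  have hf (c) : Submodule.Quotient.mk (f c) = b.repr.symm (c.mapRange ε (map_zero ε)) := by
    induction c using Finsupp.induction_linear with
    | zero => simp
    | add c d hc hd => simp [Finsupp.mapRange_add (map_add ε), hc, hd]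
    | single i a =>
      rw [Finsupp.mapRange_single, Module.Basis.repr_symm_single, ← hy,
        ← Submodule.Quotient.mk_smul_ker_smul_top, Finsupp.linearCombination_single]
  have hbij : Function.Bijective f := by
    refine LinearMap.bijective_of_pow_eq_bot hI ?_ ?_
    · refine eq_top_iff.mpr fun x _ => ?_
      obtain ⟨d, hd⟩ := b.repr.symm.surjective (Submodule.Quotient.mk x)
      set c := d.mapRange (algebraMap R A) (map_zero _)
      have hc : c.mapRange ε (map_zero ε) = d := by ext; simp [c]
      have hx : x - f c ∈ RingHom.ker ε • (⊤ : Submodule A M) := by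
        rw [← Submodule.Quotient.mk_eq_zero, Submodule.Quotient.mk_sub, hf, hc, hd, sub_self]
      simpa using Submodule.add_mem_sup (LinearMap.mem_range_self f c) hx
    · intro c hc
      rw [Submodule.mem_comap, ← Submodule.Quotient.mk_eq_zero, hf, LinearEquiv.map_eq_zero_iff]
        at hc
      refine (Finsupp.mem_smul_top_iff _ c).mpr fun i => ?_
      simpa using DFunLike.congr_fun hc i
  exact Module.Free.of_equiv (LinearEquiv.ofBijective f hbij)

end Augmentation

namespace MonoidAlgebra

section Monoid

variable (k π : Type*) [CommRing k] [Monoid π]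

noncomputable def augmentation : MonoidAlgebra k π →ₐ[k] k := lift k k π 1

variable {k π}

@[simp]
theorem augmentation_single (g : π) (r : k) : augmentation k π (single g r) = r := by
  simp [augmentation, lift_single]

theorem ker_augmentation_restrictScalars :
    (RingHom.ker (augmentation k π)).restrictScalars k =
      Submodule.span k (Set.range fun g => of k π g - 1) := by
  refine le_antisymm (fun a ha => ?_) (Submodule.span_le.mpr ?_)
  · have key (a : MonoidAlgebra k π) : a - algebraMap k _ (augmentation k π a) ∈
        Submodule.span k (Set.range fun g => of k π g - 1) := by
      induction a using MonoidAlgebra.induction_linear with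
      | zero => simp
      | add a b ha hb => simpa [add_sub_add_comm] using add_mem ha hb
      | single g r =>
        have : single g r - algebraMap k _ r = r • (of k π g - 1) := by
          simp [smul_sub, MonoidAlgebra.smul_single, Algebra.algebraMap_eq_smul_one]
        rw [augmentation_single, this]
        exact Submodule.smul_mem _ r (Submodule.subset_span ⟨g, rfl⟩)
    simpa [RingHom.mem_ker.mp ha] using key a
  · rintro _ ⟨g, rfl⟩
    simp [RingHom.mem_ker]

theorem smul_eq_zero_of_mem_ker_augmentation {M : Type*} [AddCommGroup M]
    [Module (MonoidAlgebra k π) M] {x : M} (hx : ∀ g, of k π g • x = x)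
    {a : MonoidAlgebra k π} (ha : a ∈ RingHom.ker (augmentation k π)) : a • x = 0 := by
  replace ha : a ∈ (RingHom.ker (augmentation k π)).restrictScalars k := ha
  rw [ker_augmentation_restrictScalars] at ha
  induction ha using Submodule.span_induction with
  | mem _ h =>
    obtain ⟨g, rfl⟩ := h
    rw [sub_smul, one_smul, hx, sub_self]
  | zero => exact zero_smul _ x
  | add _ _ _ _ ha hb => rw [add_smul, ha, hb, add_zero]
  | smul c a _ ha => rw [Algebra.smul_def, mul_smul, ha, smul_zero]

end Monoid

section Group

variable {k π : Type*} [CommRing k] [Group π]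
  {M : Type*} [AddCommGroup M] [Module (MonoidAlgebra k π) M] {p : ℕ} [Fact p.Prime] [CharP k p]

theorem exists_ne_zero_invariant (hπ : IsPGroup p π) [Finite M] [Nontrivial M] :
    ∃ x : M, x ≠ 0 ∧ ∀ g, of k π g • x = x := by
  let _ : MulAction π M := MulAction.compHom M (of k π)
  have hp : p ∣ Nat.card M := by
    obtain ⟨x, hx⟩ := exists_ne (0 : M)
    have hpx : p • x = 0 := by
      rw [← Nat.cast_smul_eq_nsmul (MonoidAlgebra k π), ← map_natCast (algebraMap k _),
        CharP.cast_eq_zero, map_zero, zero_smul]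
    exact addOrderOf_eq_prime hpx hx ▸ addOrderOf_dvd_natCard x
  obtain ⟨x, hx, hne⟩ :=
    hπ.exists_fixed_point_of_prime_dvd_card_of_fixed_point M hp (a := 0) fun g =>
      smul_zero (of k π g)
  exact ⟨x, hne.symm, hx⟩

theorem exists_ker_augmentation_pow_smul_top_eq_bot (hπ : IsPGroup p π) [Finite M] :
    ∃ n, RingHom.ker (augmentation k π) ^ n • (⊤ : Submodule (MonoidAlgebra k π) M) = ⊥ := by
  set I := RingHom.ker (augmentation k π)
  induction h : Nat.card M using Nat.strong_induction_on generalizing M with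
  | _ c ih =>
  rcases subsingleton_or_nontrivial M with hM | hM
  · exact ⟨0, Subsingleton.elim _ _⟩
  obtain ⟨x, hx0, hx⟩ := exists_ne_zero_invariant (k := k) hπ (M := M)
  set N := Submodule.span (MonoidAlgebra k π) {x}
  have hIN : I • N = ⊥ := by
    refine eq_bot_iff.mpr (Submodule.smul_le.mpr fun a ha y hy => ?_)
    obtain ⟨b, rfl⟩ := Submodule.mem_span_singleton.mp hy
    rw [smul_smul, smul_eq_zero_of_mem_ker_augmentation hx (I.mul_mem_right b ha)]
    exact zero_mem _
  have : Finite (M ⧸ N) := Quotient.finite _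
  have hcard : Nat.card (M ⧸ N) < c := by
    have : 1 < Nat.card N := Finite.one_lt_card_iff_nontrivial.mpr
      ⟨⟨0, ⟨x, Submodule.mem_span_singleton_self x⟩, fun h => hx0 (congrArg Subtype.val h).symm⟩⟩
    rw [← h, N.card_eq_card_quotient_mul_card]
    exact lt_mul_left Nat.card_pos this
  obtain ⟨n, hn⟩ := ih _ hcard rfl
  have hnN : I ^ n • ⊤ ≤ N := by
    rw [← N.ker_mkQ, LinearMap.ker, ← Submodule.map_le_iff_le_comap, Submodule.map_smul'',
      Submodule.map_top, Submodule.range_mkQ, hn]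
  refine ⟨n + 1, eq_bot_iff.mpr ?_⟩
  rw [Ideal.IsTwoSided.pow_succ, Submodule.mul_smul, ← hIN]
  exact smul_mono_right _ hnN

theorem exists_ker_augmentation_pow_eq_bot_of_finite [Finite k] [Finite π] (hπ : IsPGroup p π) :
    ∃ n, RingHom.ker (augmentation k π) ^ n = ⊥ := by
  have : Finite (MonoidAlgebra k π) := Module.finite_of_finite k
  obtain ⟨n, hn⟩ :=
    exists_ker_augmentation_pow_smul_top_eq_bot (k := k) hπ (M := MonoidAlgebra k π)
  exact ⟨n, by rwa [Ideal.smul_eq_mul, Ideal.mul_top] at hn⟩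

end Group

theorem exists_ker_augmentation_pow_eq_bot {R π : Type*} [CommRing R] [Group π] [Finite π]
    {p : ℕ} [Fact p.Prime] [CharP R p] (hπ : IsPGroup p π) :
    ∃ n, RingHom.ker (augmentation R π) ^ n = ⊥ := by
  obtain ⟨n, hn⟩ := exists_ker_augmentation_pow_eq_bot_of_finite (k := ZMod p) hπ
  have hn' : RingHom.ker (augmentation (ZMod p) π) ^ (n + 1) = ⊥ :=
    le_bot_iff.mp (hn ▸ Ideal.pow_le_pow_right n.le_succ)
  let φ := mapRingHom π (ZMod.castHom (dvd_refl p) R)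
  have hS : φ '' Set.range (fun g => of (ZMod p) π g - 1) = Set.range fun g => of R π g - 1 := by
    rw [← Set.range_comp]
    congr 1
    ext g
    simp [φ]
  refine ⟨n + 1, Submodule.restrictScalars_injective R _ _ ?_⟩
  rw [Submodule.restrictScalars_pow n.succ_ne_zero, ker_augmentation_restrictScalars,
    Submodule.span_pow, ← hS, ← Set.image_pow, Submodule.restrictScalars_bot,
    Submodule.span_eq_bot]
  rintro _ ⟨t, ht, rfl⟩
  have : t ∈ RingHom.ker (augmentation (ZMod p) π) ^ (n + 1) := by
    refine Submodule.pow_subset_pow _ (Set.pow_subset_pow_left ?_ ht)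
    rintro _ ⟨g, rfl⟩
    simp [RingHom.mem_ker]
  rw [hn', Submodule.mem_bot] at this
  rw [this, map_zero]

end MonoidAlgebra

universe u

theorem free_of_projective_groupRing_semilocal_charP_general
    (p : ℕ) (hp : p.Prime)
    (R : Type u) [CommRing R] [IsDedekindDomain R] [CharP R p]
    (hsemilocal : {I : Ideal R | I.IsMaximal}.Finite)
    (π : Type u) [Group π] [Finite π] (hπ : IsPGroup p π)
    (P : Type u) [AddCommGroup P] [Module (MonoidAlgebra R π) P]
    [Module.Finite (MonoidAlgebra R π) P]
    (hproj : Module.Projective (MonoidAlgebra R π) P) :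
    Module.Free (MonoidAlgebra R π) P := by
  have := Fact.mk hp
  have := IsPrincipalIdealRing.of_finite_maximals hsemilocal
  obtain ⟨n, hn⟩ := MonoidAlgebra.exists_ker_augmentation_pow_eq_bot (R := R) hπ
  let _ : Module R P := Module.compHom P (algebraMap R (MonoidAlgebra R π))
  have : IsScalarTower R (MonoidAlgebra R π) P := .of_algebraMap_smul fun _ _ => rfl
  have := Module.Finite.trans (R := R) (MonoidAlgebra R π) P
  have := Module.isTorsionFree_quotient_ker_smul_top (MonoidAlgebra.augmentation R π) (M := P)
  exact Module.free_of_free_quotient_ker_smul_top _ hn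

theorem free_of_projective_groupRing_semilocal_charP
    (p : ℕ) (hp : p.Prime)
    (R : Type u) [CommRing R] [IsDomain R] [IsDedekindDomain R] [CharP R p]
    (hsemilocal : {I : Ideal R | I.IsMaximal}.Finite)
    (π : Type u) [Group π] [Finite π] (hπ : IsPGroup p π)
    (P : Type u) [AddCommGroup P] [Module (MonoidAlgebra R π) P]
    [Module.Finite (MonoidAlgebra R π) P]
    (hproj : Module.Projective (MonoidAlgebra R π) P) :
    Module.Free (MonoidAlgebra R π) P :=
  free_of_projective_groupRing_semilocal_charP_general p hp R hsemilocal π hπ P hproj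
end

section
/- Let R be a commutative noetherian integral domain with char R = p > 0 and let π be a finite group with p dividing |π| whose p-Sylow subgroup π_p is normal in π; write π' = π/π_p and assume the group extension 1 → π_p → π → π' → 1 splits. Then every finitely generated projective Rπ-module is isomorphic to Rπ ⊗_{Rπ'} P₀ for some finitely generated projective Rπ'-module P₀. -/
/-!
Write `A = Rπ`, `B = Rπ'`, let `φ : A → B` be induced by the projection and `σ : B → A` by the
splitting, so that `φ ∘ σ = id`. The kernel `I` of `φ` is nilpotent: it is generated by the
`h - 1`, `h ∈ π_p`, both as a left and (`π_p` being normal) as a right ideal, and the augmentation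
ideal of a `p`-group in characteristic `p` is nilpotent (divide out a central element `z` of
order `p`, for which `(z - 1)^p = z^p - 1 = 0`, and induct on the order).

Put `P₀ = P / IP`. Like `P`, it is a direct summand of a free module, so it is finitely generated
projective over `B`, and the projection `P → P₀` has a `σ`-semilinear section `t`. The map
`A ⊗_B P₀ → P`, `a ⊗ q ↦ a • t q`, is onto modulo `IP`, hence onto by Nakayama's lemma for the
nilpotent `I`. It splits because `P` is projective, and its kernel `K` lies in `I (A ⊗_B P₀)`, so
`K = I K` and `K = 0`.
-/

universe u

open TensorProduct

/-- `Rπ ⊗_{RH} N` for a group homomorphism (e.g. a subgroup embedding) `s : H →* π` and an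
`RH`-module `N`: the quotient of `Rπ ⊗_R N` by the relations `a·s(g) ⊗ q = a ⊗ g·q`. -/
noncomputable abbrev inducedAlong (R : Type u) [CommRing R] {π H : Type u} [Group π] [Group H]
    (s : H →* π) (N : Type u) [AddCommGroup N] [Module R N] [Module (MonoidAlgebra R H) N]
    [IsScalarTower R (MonoidAlgebra R H) N] : Type u :=
  (TensorProduct R (MonoidAlgebra R π) N) ⧸
    (Submodule.span (MonoidAlgebra R π)
      {x | ∃ (g : H) (q : N),
        x = (MonoidAlgebra.of R π (s g)) ⊗ₜ[R] q
          - 1 ⊗ₜ[R] ((MonoidAlgebra.of R H g) • q)})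

namespace Submodule

section Ring

variable {A M : Type*} [Ring A] [AddCommGroup M] [Module A M]

theorem le_of_le_sup_smul_of_isNilpotent {I : Ideal A} (hI : IsNilpotent I)
    {N L : Submodule A M} (h : L ≤ N ⊔ I • L) : L ≤ N := by
  obtain ⟨n, hn⟩ := hI
  have key : ∀ k : ℕ, L ≤ N ⊔ I ^ k • L := by
    intro k
    induction k with
    | zero => exact le_sup_of_le_right (Submodule.one_smul L).ge
    | succ k ih =>
      calc L ≤ N ⊔ I ^ k • L := ih
        _ ≤ N ⊔ I ^ k • (N ⊔ I • L) := sup_le_sup_left (smul_mono_right _ h) _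
        _ = N ⊔ (I ^ k • N ⊔ I ^ (k + 1) • L) := by
          rw [smul_sup, Submodule.pow_succ, Submodule.mul_smul]
        _ ≤ N ⊔ I ^ (k + 1) • L :=
          sup_le le_sup_left (sup_le_sup_right smul_le_right _)
  simpa [hn] using key n

end Ring

variable {R A : Type*} [CommSemiring R] [Semiring A] [Algebra R A]

theorem top_mul_pow_le {J : Submodule R A} (hJ : J * ⊤ ≤ ⊤ * J) (n : ℕ) :
    (⊤ * J) ^ n ≤ ⊤ * J ^ n := by
  have hcomm : ∀ k : ℕ, J ^ k * ⊤ ≤ ⊤ * J ^ k := by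
    intro k
    induction k with
    | zero => simp
    | succ k ih =>
      calc J ^ (k + 1) * ⊤ = J ^ k * (J * ⊤) := by rw [pow_succ, mul_assoc]
        _ ≤ J ^ k * (⊤ * J) := by gcongr
        _ = J ^ k * ⊤ * J := (mul_assoc _ _ _).symm
        _ ≤ ⊤ * J ^ k * J := by gcongr
        _ = ⊤ * J ^ (k + 1) := by rw [mul_assoc, pow_succ]
  induction n with
  | zero => simp
  | succ n ih =>
    calc (⊤ * J) ^ (n + 1) ≤ ⊤ * J ^ n * (⊤ * J) := by rw [pow_succ]; gcongr
      _ = ⊤ * (J ^ n * ⊤) * J := by simp only [mul_assoc]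
      _ ≤ ⊤ * (⊤ * J ^ n) * J := mul_le_mul_left (mul_le_mul_right (hcomm n) _) _
      _ = ⊤ * ⊤ * J ^ (n + 1) := by simp only [mul_assoc, pow_succ]
      _ ≤ ⊤ * J ^ (n + 1) := by gcongr; exact le_top

theorem isNilpotent_top_mul {J : Submodule R A} (hJ : J * ⊤ ≤ ⊤ * J) (h : IsNilpotent J) :
    IsNilpotent (⊤ * J) := by
  obtain ⟨n, hn⟩ := h
  exact ⟨n, le_bot_iff.mp ((top_mul_pow_le hJ n).trans (by rw [hn, mul_zero]; rfl))⟩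

theorem isNilpotent_of_le {I J : Submodule R A} (hIJ : I ≤ J) (hJ : IsNilpotent J) :
    IsNilpotent I := by
  obtain ⟨n, hn⟩ := hJ
  exact ⟨n, le_bot_iff.mp ((pow_le_pow_left' hIJ n).trans hn.le)⟩

end Submodule

theorem Ideal.isNilpotent_of_isNilpotent_restrictScalars {R A : Type*} [CommSemiring R]
    [Semiring A] [Algebra R A] {I : Ideal A} (h : IsNilpotent (I.restrictScalars R)) :
    IsNilpotent I := by
  obtain ⟨n, hn⟩ := h
  refine ⟨n + 1, Submodule.restrictScalars_injective R _ _ ?_⟩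
  rw [Submodule.restrictScalars_pow n.succ_ne_zero, pow_succ, hn, zero_mul]
  rfl

theorem LinearMap.ker_le_smul_ker_of_comp_eq_id {A X Y : Type*} [Ring A] [AddCommGroup X]
    [Module A X] [AddCommGroup Y] [Module A Y] {f : X →ₗ[A] Y} {u : Y →ₗ[A] X} (hfu : f ∘ₗ u = id)
    {I : Ideal A} (h : ker f ≤ I • ⊤) : ker f ≤ I • ker f := by
  have hsplit : range u ⊔ ker f = ⊤ := by
    refine eq_top_iff.mpr fun x _ ↦
      Submodule.mem_sup.mpr ⟨u (f x), mem_range_self u _, x - u (f x), ?_, by abel⟩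
    rw [mem_ker, map_sub, ← comp_apply f u, hfu, id_apply, sub_self]
  intro x hx
  have hx' : x ∈ range u ⊔ I • ker f := by
    have := h hx
    rw [← hsplit, Submodule.smul_sup] at this
    exact sup_le_sup_right (Submodule.smul_le_right (I := I) (N := range u)) _ this
  obtain ⟨_, ⟨y, rfl⟩, d, hd, rfl⟩ := Submodule.mem_sup.mp hx'
  have hfd : f d = 0 := Submodule.smul_le_right hd
  have hy : y = 0 := by
    simpa [hfd, ← comp_apply f u, hfu] using hx
  rwa [hy, map_zero, zero_add]

theorem Finsupp.mem_ker_smul_top_iff {A B F ι : Type*} [Ring A] [Ring B] [FunLike F A B]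
    [RingHomClass F A B] {φ : F} {x : ι →₀ A} :
    x ∈ RingHom.ker φ • (⊤ : Submodule A (ι →₀ A)) ↔ ∀ j, φ (x j) = 0 := by
  refine ⟨fun hx ↦ ?_, fun hx ↦ ?_⟩
  · refine Submodule.smul_induction_on hx (fun a ha y _ j ↦ ?_) (fun y z hy hz j ↦ ?_)
    · rw [Finsupp.smul_apply, smul_eq_mul, map_mul, RingHom.mem_ker.mp ha, zero_mul]
    · rw [Finsupp.add_apply, map_add, hy, hz, add_zero]
  · rw [← x.sum_single]
    refine Submodule.sum_mem _ fun j _ ↦ ?_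
    rw [← Finsupp.smul_single_one]
    exact Submodule.smul_mem_smul (hx j) trivial

section Reduction

variable {R A B : Type*} [CommRing R] [Ring A] [Ring B] [Algebra R A] [Algebra R B]

/-- `B ⊗_A P`, realised as `P / (ker φ) P`, with `B` acting through `σ`. -/
def Reduction (φ : A →ₐ[R] B) (_σ : B →ₐ[R] A) (P : Type*) [AddCommGroup P] [Module A P] :
    Type _ :=
  P ⧸ (RingHom.ker φ • ⊤ : Submodule A P)

namespace Reduction

variable {φ : A →ₐ[R] B} {σ : B →ₐ[R] A} {P Q : Type*} [AddCommGroup P] [Module A P]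
  [AddCommGroup Q] [Module A Q]

instance : AddCommGroup (Reduction φ σ P) := Submodule.Quotient.addCommGroup _

instance : Module A (Reduction φ σ P) := Submodule.Quotient.module _

instance : Module B (Reduction φ σ P) := Module.compHom _ (σ : B →+* A)

section

variable [Module R P] [IsScalarTower R A P]

instance : Module R (Reduction φ σ P) := Submodule.Quotient.module' _

instance : IsScalarTower R A (Reduction φ σ P) := Submodule.Quotient.isScalarTower _ _

instance : IsScalarTower R B (Reduction φ σ P) where
  smul_assoc r b q := by
    change σ (r • b) • q = r • σ b • q
    rw [map_smul, smul_assoc]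

end

variable (φ σ P) in
def mk : P →ₗ[A] Reduction φ σ P := Submodule.mkQ _

theorem mk_surjective : Function.Surjective (mk φ σ P) := Submodule.mkQ_surjective _

theorem mk_eq_zero_iff {x : P} : mk φ σ P x = 0 ↔ x ∈ RingHom.ker φ • (⊤ : Submodule A P) :=
  Submodule.Quotient.mk_eq_zero _

theorem algHom_smul (b : B) (q : Reduction φ σ P) : σ b • q = b • q := rfl

def map (f : P →ₗ[A] Q) : Reduction φ σ P →ₗ[B] Reduction φ σ Q where
  toFun := Submodule.mapQ _ _ f (Submodule.smul_top_le_comap_smul_top _ f)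
  map_add' := map_add _
  map_smul' b := (Submodule.mapQ _ _ f (Submodule.smul_top_le_comap_smul_top _ f)).map_smul (σ b)

theorem map_comp {S : Type*} [AddCommGroup S] [Module A S] (g : Q →ₗ[A] S) (f : P →ₗ[A] Q) :
    map (φ := φ) (σ := σ) (g ∘ₗ f) = map g ∘ₗ map f := by
  ext q
  obtain ⟨x, rfl⟩ := mk_surjective q
  rfl

theorem map_id : map (φ := φ) (σ := σ) (LinearMap.id : P →ₗ[A] P) = LinearMap.id := by
  ext q
  obtain ⟨x, rfl⟩ := mk_surjective q
  rfl

theorem map_surjective {f : P →ₗ[A] Q} (hf : Function.Surjective f) :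
    Function.Surjective (map (φ := φ) (σ := σ) f) := by
  intro q
  obtain ⟨y, rfl⟩ := mk_surjective q
  obtain ⟨x, rfl⟩ := hf y
  exact ⟨mk φ σ P x, rfl⟩

variable (φ σ) in
noncomputable def ofFinsupp (ι : Type*) : (ι →₀ B) →ₗ[B] Reduction φ σ (ι →₀ A) where
  toFun e := mk φ σ (ι →₀ A) (e.mapRange σ (map_zero σ))
  map_add' e e' := by rw [Finsupp.mapRange_add (map_add σ), map_add]
  map_smul' b e := by
    rw [RingHom.id_apply, ← algHom_smul, ← map_smul]
    congr 1
    ext j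
    simp

theorem ofFinsupp_apply {ι : Type*} (e : ι →₀ B) :
    ofFinsupp φ σ ι e = mk φ σ (ι →₀ A) (e.mapRange σ (map_zero σ)) :=
  rfl

theorem ofFinsupp_bijective (hφσ : Function.LeftInverse φ σ) (ι : Type*) :
    Function.Bijective (ofFinsupp φ σ ι) := by
  refine ⟨(injective_iff_map_eq_zero _).mpr fun e he ↦ ?_, fun q ↦ ?_⟩
  · rw [ofFinsupp_apply, mk_eq_zero_iff, Finsupp.mem_ker_smul_top_iff] at he
    ext j
    simpa [hφσ (e j)] using he j
  · obtain ⟨x, rfl⟩ := mk_surjective q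
    refine ⟨x.mapRange φ (map_zero φ), ?_⟩
    rw [ofFinsupp_apply, ← sub_eq_zero, ← map_sub, mk_eq_zero_iff, Finsupp.mem_ker_smul_top_iff]
    intro j
    simp [hφσ (φ (x j))]

theorem projective (hφσ : Function.LeftInverse φ σ) [Module.Projective A P] :
    Module.Projective B (Reduction φ σ P) := by
  obtain ⟨s, hs⟩ := Module.projective_def'.mp ‹Module.Projective A P›
  have := Module.Projective.of_equiv' (LinearEquiv.ofBijective _ (ofFinsupp_bijective hφσ P))
  exact .of_split (map s) (map (Finsupp.linearCombination A id)) (by rw [← map_comp, hs, map_id])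

theorem finite (hφσ : Function.LeftInverse φ σ) [Module.Finite A P] :
    Module.Finite B (Reduction φ σ P) := by
  obtain ⟨n, r, hr⟩ := Module.Finite.exists_fin' A P
  have := Module.Finite.equiv (LinearEquiv.ofBijective _ (ofFinsupp_bijective hφσ (Fin n)))
  exact .of_surjective (map (r ∘ₗ (Finsupp.linearEquivFunOnFinite A A (Fin n)).toLinearMap))
    (map_surjective (hr.comp (LinearEquiv.surjective _)))

theorem exists_section [Module.Projective B (Reduction φ σ P)] :
    ∃ t : Reduction φ σ P →ₛₗ[(σ : B →+* A)] P, ∀ q, mk φ σ P (t q) = q := by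
  let _ : Module B P := Module.compHom P (σ : B →+* A)
  let mkB : P →ₗ[B] Reduction φ σ P :=
    { toFun := mk φ σ P
      map_add' := map_add _
      map_smul' := fun b x ↦ (mk φ σ P).map_smul (σ b) x }
  have hmkB : Function.Surjective mkB := fun q ↦ mk_surjective q
  obtain ⟨t, ht⟩ := Module.projective_lifting_property mkB LinearMap.id hmkB
  exact ⟨⟨t.toAddHom, t.map_smul⟩, LinearMap.congr_fun ht⟩

end Reduction

end Reduction

section Induced

variable {R A B : Type*} [CommRing R] [Ring A] [Ring B] [Algebra R A] [Algebra R B]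
  {φ : A →ₐ[R] B} {σ : B →ₐ[R] A}
  {N : Type*} [AddCommGroup N] [Module R N] [Module B N]
  {P : Type*} [AddCommGroup P] [Module A P] [Module R P] [IsScalarTower R A P]

variable (σ N) in
def inducedRel : Submodule A (A ⊗[R] N) :=
  Submodule.span A {x | ∃ (b : B) (q : N), x = σ b ⊗ₜ[R] q - 1 ⊗ₜ[R] (b • q)}

variable (σ N) in
/-- `A ⊗_B N`, for `A` a right `B`-module through `σ`. -/
abbrev Induced : Type _ := A ⊗[R] N ⧸ inducedRel σ N

theorem Induced.mk_algHom_tmul (b : B) (q : N) :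
    (Submodule.Quotient.mk (σ b ⊗ₜ[R] q) : Induced σ N) =
      Submodule.Quotient.mk (1 ⊗ₜ[R] (b • q)) :=
  (Submodule.Quotient.eq _).mpr (Submodule.subset_span ⟨b, q, rfl⟩)

theorem Induced.exists_sub_mk_one_tmul_mem (hφσ : Function.LeftInverse φ σ) (y : Induced σ N) :
    ∃ q : N, y - Submodule.Quotient.mk (1 ⊗ₜ[R] q) ∈ RingHom.ker φ • (⊤ : Submodule A _) := by
  obtain ⟨w, rfl⟩ := Submodule.Quotient.mk_surjective _ y
  induction w using TensorProduct.induction_on with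
  | zero => exact ⟨0, by simp⟩
  | tmul a q =>
    refine ⟨φ a • q, ?_⟩
    have hker : a - σ (φ a) ∈ RingHom.ker φ := by simp [RingHom.mem_ker, hφσ (φ a)]
    have hsmul : (Submodule.Quotient.mk ((a - σ (φ a)) ⊗ₜ[R] q) : Induced σ N) =
        (a - σ (φ a)) • Submodule.Quotient.mk (1 ⊗ₜ[R] q) := by
      rw [← Submodule.Quotient.mk_smul, smul_tmul', smul_eq_mul, mul_one]
    rw [← mk_algHom_tmul, ← Submodule.Quotient.mk_sub, ← sub_tmul, hsmul]
    exact Submodule.smul_mem_smul hker trivial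
  | add w w' hw hw' =>
    obtain ⟨q, hq⟩ := hw
    obtain ⟨q', hq'⟩ := hw'
    refine ⟨q + q', ?_⟩
    convert add_mem hq hq' using 1
    rw [tmul_add, Submodule.Quotient.mk_add, Submodule.Quotient.mk_add]
    abel

variable [IsScalarTower R B N]

def LinearMap.restrictScalarsOfAlgHom (t : N →ₛₗ[(σ : B →+* A)] P) : N →ₗ[R] P where
  toFun := t
  map_add' := t.map_add
  map_smul' r q := by
    rw [← algebraMap_smul B r q, t.map_smulₛₗ, RingHom.id_apply, AlgHom.coe_toRingHom,
      AlgHom.commutes, algebraMap_smul]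

def inducedLift (t : N →ₛₗ[(σ : B →+* A)] P) : Induced σ N →ₗ[A] P :=
  (inducedRel σ N).liftQ
    (TensorProduct.AlgebraTensorModule.lift
      (LinearMap.toSpanSingleton A _ t.restrictScalarsOfAlgHom)) <| by
    refine Submodule.span_le.mpr ?_
    rintro _ ⟨b, q, rfl⟩
    simp [LinearMap.restrictScalarsOfAlgHom, t.map_smulₛₗ]

@[simp]
theorem inducedLift_mk_tmul (t : N →ₛₗ[(σ : B →+* A)] P) (a : A) (q : N) :
    inducedLift t (Submodule.Quotient.mk (a ⊗ₜ[R] q)) = a • t q := by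
  simp [inducedLift, LinearMap.restrictScalarsOfAlgHom]

variable {t : N →ₛₗ[(σ : B →+* A)] P}

theorem inducedLift_surjective (hI : IsNilpotent (RingHom.ker φ))
    (ht : Function.Surjective (Reduction.mk φ σ P ∘ t)) :
    Function.Surjective (inducedLift t) := by
  refine LinearMap.range_eq_top.mp (top_le_iff.mp
    (Submodule.le_of_le_sup_smul_of_isNilpotent hI fun x _ ↦ ?_))
  obtain ⟨q, hq⟩ := ht (Reduction.mk φ σ P x)
  refine Submodule.mem_sup.mpr ⟨t q, ⟨Submodule.Quotient.mk (1 ⊗ₜ[R] q), by simp⟩, x - t q, ?_,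
    by abel⟩
  rw [← Reduction.mk_eq_zero_iff, map_sub, ← Function.comp_apply (f := Reduction.mk φ σ P), hq,
    sub_self]

theorem ker_inducedLift_le_smul_top (hφσ : Function.LeftInverse φ σ)
    (ht : Function.Injective (Reduction.mk φ σ P ∘ t)) :
    LinearMap.ker (inducedLift t) ≤ RingHom.ker φ • ⊤ := by
  -- Modulo `I`, `y` is some `1 ⊗ q`; then `t q ∈ IP`, so `q = 0`.
  intro y hy
  obtain ⟨q, hq⟩ := Induced.exists_sub_mk_one_tmul_mem hφσ y
  have hfq : -t q ∈ RingHom.ker φ • (⊤ : Submodule A P) := by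
    simpa [LinearMap.mem_ker.mp hy] using
      Submodule.smul_top_le_comap_smul_top _ (inducedLift t) hq
  have hq0 : q = 0 := ht <| by
    simp only [Function.comp_apply, map_zero, Reduction.mk_eq_zero_iff]
    simpa using neg_mem hfq
  simpa [hq0] using hq

theorem inducedLift_bijective [Module.Projective A P] (hφσ : Function.LeftInverse φ σ)
    (hI : IsNilpotent (RingHom.ker φ)) (ht : Function.Bijective (Reduction.mk φ σ P ∘ t)) :
    Function.Bijective (inducedLift t) := by
  have hsurj := inducedLift_surjective hI ht.2
  obtain ⟨u, hu⟩ := Module.projective_lifting_property _ LinearMap.id hsurj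
  have hker := LinearMap.ker_le_smul_ker_of_comp_eq_id hu (ker_inducedLift_le_smul_top hφσ ht.1)
  refine ⟨LinearMap.ker_eq_bot.mp (le_bot_iff.mp ?_), hsurj⟩
  exact Submodule.le_of_le_sup_smul_of_isNilpotent hI (by rwa [bot_sup_eq])

end Induced

theorem nonempty_linearEquiv_induced_reduction {R A B : Type*} [CommRing R] [Ring A] [Ring B]
    [Algebra R A] [Algebra R B] {φ : A →ₐ[R] B} {σ : B →ₐ[R] A}
    (hφσ : Function.LeftInverse φ σ) (hI : IsNilpotent (RingHom.ker φ))
    (P : Type*) [AddCommGroup P] [Module A P] [Module R P] [IsScalarTower R A P]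
    [Module.Projective A P] : Nonempty (P ≃ₗ[A] Induced σ (Reduction φ σ P)) := by
  have := Reduction.projective hφσ (P := P)
  obtain ⟨t, ht⟩ := Reduction.exists_section (φ := φ) (σ := σ) (P := P)
  have hmkt : Reduction.mk φ σ P ∘ t = id := funext ht
  exact ⟨(LinearEquiv.ofBijective _
    (inducedLift_bijective hφσ hI (hmkt ▸ Function.bijective_id))).symm⟩

theorem IsPGroup.exists_orderOf_eq_prime_mem_center {p : ℕ} [Fact p.Prime] {G : Type*} [Group G]
    [Finite G] [Nontrivial G] (hG : IsPGroup p G) :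
    ∃ z ∈ Subgroup.center G, orderOf z = p := by
  have := hG.center_nontrivial
  obtain ⟨z, hz⟩ := exists_prime_orderOf_dvd_card' (G := Subgroup.center G) p
    (((hG.to_subgroup _).card_eq_or_dvd).resolve_left Finite.one_lt_card.ne')
  exact ⟨z, z.2, by rw [← hz, Subgroup.orderOf_coe]⟩

namespace MonoidAlgebra

variable (R : Type*) [CommRing R] {G : Type*} [Group G]

noncomputable def augmentationSpan (N : Subgroup G) : Submodule R (MonoidAlgebra R G) :=
  Submodule.span R ((fun h ↦ of R G h - 1) '' N)

variable {R}

theorem of_sub_one_mem_augmentationSpan {N : Subgroup G} {h : G} (hh : h ∈ N) :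
    of R G h - 1 ∈ augmentationSpan R N :=
  Submodule.subset_span ⟨h, hh, rfl⟩

theorem map_augmentationSpan {H : Type*} [Group H] (f : G →* H) (N : Subgroup G) :
    (augmentationSpan R N).map (mapDomainAlgHom R R f).toLinearMap =
      augmentationSpan R (N.map f) := by
  rw [augmentationSpan, augmentationSpan, Submodule.map_span, ← Set.image_comp, Subgroup.coe_map,
    ← Set.image_comp]
  refine congrArg _ (Set.image_congr fun g _ ↦ ?_)
  rw [Function.comp_apply, Function.comp_apply, AlgHom.toLinearMap_apply, map_sub, map_one,
    mapDomainAlgHom_apply, of_apply, of_apply, mapDomain_single]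

theorem of_sub_of_eq_mul (g g' : G) :
    of R G g - of R G g' = of R G g' * (of R G (g'⁻¹ * g) - 1) := by
  rw [mul_sub, mul_one, ← map_mul, mul_inv_cancel_left]

theorem augmentationSpan_mul_top_le (N : Subgroup G) [N.Normal] :
    augmentationSpan R N * ⊤ ≤ ⊤ * augmentationSpan R N := by
  refine Submodule.mul_le.mpr fun x hx y _ ↦ ?_
  clear ‹y ∈ ⊤›
  induction y using MonoidAlgebra.induction_on with
  | of g =>
    refine Submodule.span_induction (p := fun x _ ↦ x * of R G g ∈ ⊤ * augmentationSpan R N)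
      ?_ (by simp) (fun _ _ _ _ h h' ↦ by rw [add_mul]; exact add_mem h h')
      (fun r _ _ h ↦ by rw [smul_mul_assoc]; exact Submodule.smul_mem _ r h) hx
    rintro _ ⟨h, hh, rfl⟩
    have hconj : g⁻¹ * h * g ∈ N := by simpa using ‹N.Normal›.conj_mem h hh g⁻¹
    rw [sub_mul, one_mul, ← map_mul, show h * g = g * (g⁻¹ * h * g) by group, of_sub_of_eq_mul,
      inv_mul_cancel_left]
    exact Submodule.mul_mem_mul Submodule.mem_top (of_sub_one_mem_augmentationSpan hconj)
  | add y y' hy hy' => rw [mul_add]; exact add_mem hy hy'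
  | smul r y hy => rw [mul_smul_comm]; exact Submodule.smul_mem _ r hy

theorem ker_mapDomain_quotient_le (N : Subgroup G) [N.Normal] :
    (RingHom.ker (mapDomainAlgHom R R (QuotientGroup.mk' N))).restrictScalars R ≤
      ⊤ * augmentationSpan R N := by
  -- `f` moves every `g` to the chosen representative of `gN`, so it factors through `R[G ⧸ N]`.
  let f := mapDomainLinearMap R R fun g : G ↦ (g : G ⧸ N).out
  have key : ∀ b, b - f b ∈ ⊤ * augmentationSpan R N := by
    intro b
    induction b using MonoidAlgebra.induction_on with
    | of g =>
      have hmem : (g : G ⧸ N).out⁻¹ * g ∈ N := QuotientGroup.eq.mp (QuotientGroup.out_eq' _)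
      rw [of_apply, mapDomainLinearMap_single, ← of_apply, ← of_apply, of_sub_of_eq_mul]
      exact Submodule.mul_mem_mul Submodule.mem_top (of_sub_one_mem_augmentationSpan hmem)
    | add y y' hy hy' =>
      rw [map_add, add_sub_add_comm]
      exact add_mem hy hy'
    | smul r y hy =>
      rw [map_smul, ← smul_sub]
      exact Submodule.smul_mem _ r hy
  intro a ha
  have hfa : f a = 0 := by
    change mapDomainLinearMap R R ((fun q : G ⧸ N ↦ q.out) ∘ QuotientGroup.mk) a = 0
    have ha' : mapDomainLinearMap R R (QuotientGroup.mk : G → G ⧸ N) a = 0 := ha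
    rw [mapDomainLinearMap_comp, LinearMap.comp_apply, ha', map_zero]
  simpa [hfa] using key a

variable {p : ℕ} [Fact p.Prime] [CharP R p]

theorem isNilpotent_ker_mapDomain_zpowers {z : G} (hz : z ∈ Subgroup.center G)
    (hzp : orderOf z = p) [(Subgroup.zpowers z).Normal] :
    IsNilpotent ((RingHom.ker (mapDomainAlgHom R R
      (QuotientGroup.mk' (Subgroup.zpowers z)))).restrictScalars R) := by
  set w := of R G z - 1
  have hw : ∀ x, Commute w x := fun x ↦
    (of_commute (fun g ↦ (Subgroup.mem_center_iff.mp hz g).symm) x).sub_left (Commute.one_left x)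
  have hwp : w ^ p = 0 := by
    have := charP_of_injective_algebraMap' R (A := MonoidAlgebra R G) p
    rw [sub_pow_char_of_commute _ (Commute.one_right _), one_pow, ← map_pow, ← hzp,
      pow_orderOf_eq_one, map_one, sub_self]
  have hJ : Submodule.span R {w} * ⊤ ≤ ⊤ * Submodule.span R {w} := by
    refine Submodule.mul_le.mpr fun a ha x _ ↦ ?_
    obtain ⟨r, rfl⟩ := Submodule.mem_span_singleton.mp ha
    rw [smul_mul_assoc, (hw x).eq, ← mul_smul_comm]
    exact Submodule.mul_mem_mul Submodule.mem_top
      (Submodule.smul_mem _ r (Submodule.mem_span_singleton_self w))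
  have hnil : IsNilpotent (Submodule.span R {w}) :=
    ⟨p, by
      rw [Submodule.span_pow, Set.singleton_pow, hwp, Submodule.span_singleton_eq_bot.mpr rfl]
      rfl⟩
  have hle : augmentationSpan R (Subgroup.zpowers z) ≤ ⊤ * Submodule.span R {w} := by
    refine Submodule.span_le.mpr ?_
    rintro _ ⟨h, hh, rfl⟩
    have hfin : IsOfFinOrder z := orderOf_pos_iff.mp (hzp ▸ Fact.out (p := p.Prime)).pos
    obtain ⟨k, rfl⟩ := hfin.mem_powers_iff_mem_zpowers.mpr hh
    change of R G (z ^ k) - 1 ∈ _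
    rw [map_pow, ← geom_sum_mul]
    exact Submodule.mul_mem_mul Submodule.mem_top (Submodule.mem_span_singleton_self w)
  refine Submodule.isNilpotent_of_le ?_ (Submodule.isNilpotent_top_mul hJ hnil)
  calc _ ≤ ⊤ * augmentationSpan R (Subgroup.zpowers z) := ker_mapDomain_quotient_le _
    _ ≤ ⊤ * (⊤ * Submodule.span R {w}) := by gcongr
    _ ≤ ⊤ * Submodule.span R {w} := by rw [← mul_assoc]; gcongr; exact le_top

theorem isNilpotent_augmentationSpan_top [Finite G] (hG : IsPGroup p G) :
    IsNilpotent (augmentationSpan R (⊤ : Subgroup G)) := by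
  induction h : Nat.card G using Nat.strong_induction_on generalizing G with
  | _ n ih =>
    rcases subsingleton_or_nontrivial G with hG1 | hG1
    · refine ⟨1, ?_⟩
      rw [pow_one, Submodule.zero_eq_bot, eq_bot_iff, augmentationSpan, Submodule.span_le]
      rintro _ ⟨g, -, rfl⟩
      change of R G g - 1 ∈ (⊥ : Submodule R _)
      rw [Subsingleton.elim g 1, map_one, sub_self]
      exact zero_mem _
    obtain ⟨z, hz, hzp⟩ := hG.exists_orderOf_eq_prime_mem_center
    have : (Subgroup.zpowers z).Normal :=
      ⟨fun h hh g ↦ by rwa [Subgroup.mem_center_iff.mp (Subgroup.zpowers_le.mpr hz hh) g,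
        mul_inv_cancel_right]⟩
    have hcard : Nat.card (G ⧸ Subgroup.zpowers z) < n := by
      have := (Subgroup.zpowers z).card_eq_card_quotient_mul_card_subgroup
      rw [Nat.card_zpowers, hzp, h] at this
      have hpos : 0 < Nat.card (G ⧸ Subgroup.zpowers z) := Nat.card_pos
      nlinarith [(Fact.out : p.Prime).one_lt]
    obtain ⟨m, hm⟩ := ih _ hcard (hG.to_quotient _) rfl
    let ρ := mapDomainAlgHom R R (QuotientGroup.mk' (Subgroup.zpowers z))
    have hmap : (augmentationSpan R (⊤ : Subgroup G)).map ρ.toLinearMap = augmentationSpan R ⊤ := by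
      rw [map_augmentationSpan, Subgroup.map_top_of_surjective _ (QuotientGroup.mk'_surjective _)]
    have hker : augmentationSpan R (⊤ : Subgroup G) ^ m ≤ (RingHom.ker ρ).restrictScalars R := by
      intro x hx
      have hρx := Submodule.mem_map_of_mem (f := ρ.toLinearMap) hx
      rw [Submodule.map_pow] at hρx
      rwa [hmap, hm] at hρx
    exact IsNilpotent.of_pow (Submodule.isNilpotent_of_le hker
      (isNilpotent_ker_mapDomain_zpowers hz hzp))

theorem isNilpotent_augmentationSpan [Finite G] {N : Subgroup G} (hN : IsPGroup p N) :
    IsNilpotent (augmentationSpan R N) := by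
  obtain ⟨n, hn⟩ := isNilpotent_augmentationSpan_top (R := R) hN
  have hmap : (augmentationSpan R (⊤ : Subgroup N)).map
      (mapDomainAlgHom R R N.subtype).toLinearMap = augmentationSpan R N := by
    rw [map_augmentationSpan, ← MonoidHom.range_eq_map, Subgroup.range_subtype]
  exact ⟨n, by rw [← hmap, ← Submodule.map_pow, hn]; exact Submodule.map_bot _⟩

theorem isNilpotent_ker_mapDomain_quotient [Finite G] {N : Subgroup G} [N.Normal]
    (hN : IsPGroup p N) : IsNilpotent (RingHom.ker (mapDomainAlgHom R R (QuotientGroup.mk' N))) :=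
  Ideal.isNilpotent_of_isNilpotent_restrictScalars <| Submodule.isNilpotent_of_le
    (ker_mapDomain_quotient_le N) <| Submodule.isNilpotent_top_mul
      (augmentationSpan_mul_top_le N) (isNilpotent_augmentationSpan hN)

end MonoidAlgebra

theorem MonoidAlgebra.leftInverse_mapDomainAlgHom {R M N : Type*} [CommSemiring R] [Monoid M]
    [Monoid N] {f : M →* N} {s : N →* M} (h : Function.LeftInverse f s) :
    Function.LeftInverse (mapDomainAlgHom R R f) (mapDomainAlgHom R R s) := fun b ↦ by
  rw [← AlgHom.comp_apply, ← mapDomainAlgHom_comp, show f.comp s = .id N from MonoidHom.ext h,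
    mapDomainAlgHom_id, AlgHom.id_apply]

theorem MonoidAlgebra.inducedRel_mapDomainAlgHom {R : Type*} [CommRing R] {π H : Type*}
    [Group π] [Group H] (s : H →* π) (N : Type*) [AddCommGroup N] [Module R N]
    [Module (MonoidAlgebra R H) N] [IsScalarTower R (MonoidAlgebra R H) N] :
    inducedRel (mapDomainAlgHom R R s) N = Submodule.span (MonoidAlgebra R π)
      {x | ∃ (g : H) (q : N), x = of R π (s g) ⊗ₜ[R] q - 1 ⊗ₜ[R] (of R H g • q)} := by
  have hσ : ∀ g, mapDomainAlgHom R R s (of R H g) = of R π (s g) := fun _ ↦ mapDomain_single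
  refine le_antisymm (Submodule.span_le.mpr ?_) (Submodule.span_le.mpr ?_)
  · rintro _ ⟨b, q, rfl⟩
    rw [SetLike.mem_coe]
    induction b using MonoidAlgebra.induction_on with
    | of g => exact Submodule.subset_span ⟨g, q, by rw [hσ]⟩
    | add b b' hb hb' =>
      convert add_mem hb hb' using 1
      rw [map_add, add_tmul, add_smul, tmul_add]
      abel
    | smul r b hb =>
      convert Submodule.smul_of_tower_mem _ r hb using 1
      rw [map_smul, smul_assoc, tmul_smul, smul_tmul', smul_sub, smul_tmul', smul_tmul']
  · rintro _ ⟨g, q, rfl⟩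
    exact Submodule.subset_span ⟨of R H g, q, by rw [hσ]⟩

theorem projective_groupRing_induced_from_quotient_of_split_general
    (R : Type u) [CommRing R] [IsDomain R]
    (p : ℕ) [CharP R p] (hp : p ≠ 0)
    (π : Type u) [Group π] [Fintype π]
    (π_p : Sylow p π) [hN : (π_p : Subgroup π).Normal]
    (s : (π ⧸ (π_p : Subgroup π)) →* π)
    (hs : ∀ x, QuotientGroup.mk' (π_p : Subgroup π) (s x) = x)
    (P : Type u) [AddCommGroup P] [Module (MonoidAlgebra R π) P]
    [Module.Finite (MonoidAlgebra R π) P]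
    (hproj : Module.Projective (MonoidAlgebra R π) P) :
    ∃ (P₀ : Type u) (_ : AddCommGroup P₀) (_ : Module R P₀)
      (_ : Module (MonoidAlgebra R (π ⧸ (π_p : Subgroup π))) P₀)
      (_ : IsScalarTower R (MonoidAlgebra R (π ⧸ (π_p : Subgroup π))) P₀),
      Module.Finite (MonoidAlgebra R (π ⧸ (π_p : Subgroup π))) P₀ ∧
      Module.Projective (MonoidAlgebra R (π ⧸ (π_p : Subgroup π))) P₀ ∧
      Nonempty (P ≃ₗ[MonoidAlgebra R π] inducedAlong R s P₀) := by
  have : Fact p.Prime := ⟨(CharP.char_is_prime_or_zero R p).resolve_right hp⟩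
  have hφσ := MonoidAlgebra.leftInverse_mapDomainAlgHom (R := R) hs
  have hI := MonoidAlgebra.isNilpotent_ker_mapDomain_quotient (R := R) π_p.isPGroup'
  let _ : Module R P := Module.compHom P (algebraMap R (MonoidAlgebra R π))
  have : IsScalarTower R (MonoidAlgebra R π) P := IsScalarTower.of_algebraMap_smul fun _ _ ↦ rfl
  obtain ⟨e⟩ := nonempty_linearEquiv_induced_reduction hφσ hI P
  exact ⟨Reduction _ (MonoidAlgebra.mapDomainAlgHom R R s) P, inferInstance, inferInstance,
    inferInstance, inferInstance, Reduction.finite hφσ, Reduction.projective hφσ,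
    ⟨e.trans (Submodule.quotEquivOfEq _ _ (MonoidAlgebra.inducedRel_mapDomainAlgHom s _))⟩⟩

theorem projective_groupRing_induced_from_quotient_of_split
    (R : Type u) [CommRing R] [IsDomain R] [IsNoetherianRing R]
    (p : ℕ) [CharP R p] (hp : p ≠ 0)
    (π : Type u) [Group π] [Fintype π] (hdvd : p ∣ Fintype.card π)
    (π_p : Sylow p π) [hN : (π_p : Subgroup π).Normal]
    (s : (π ⧸ (π_p : Subgroup π)) →* π)
    (hs : ∀ x, QuotientGroup.mk' (π_p : Subgroup π) (s x) = x)
    (P : Type u) [AddCommGroup P] [Module (MonoidAlgebra R π) P]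
    [Module.Finite (MonoidAlgebra R π) P]
    (hproj : Module.Projective (MonoidAlgebra R π) P) :
    ∃ (P₀ : Type u) (_ : AddCommGroup P₀) (_ : Module R P₀)
      (_ : Module (MonoidAlgebra R (π ⧸ (π_p : Subgroup π))) P₀)
      (_ : IsScalarTower R (MonoidAlgebra R (π ⧸ (π_p : Subgroup π))) P₀),
      Module.Finite (MonoidAlgebra R (π ⧸ (π_p : Subgroup π))) P₀ ∧
      Module.Projective (MonoidAlgebra R (π ⧸ (π_p : Subgroup π))) P₀ ∧
      Nonempty (P ≃ₗ[MonoidAlgebra R π] inducedAlong R s P₀) :=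
  projective_groupRing_induced_from_quotient_of_split_general R p hp π π_p (hN := hN) s hs P hproj
end

section
/- Let (R,𝔐) be a commutative artinian local ring and let π be a finite cyclic group. Then for every finitely generated indecomposable projective Rπ-module P, every Jordan–Hölder composition factor of P is isomorphic to the simple module P/rad(Rπ)P; equivalently, the Cartan matrix of Rπ is a diagonal matrix with non-zero diagonal entries. -/
/-!
Since `π` is cyclic, `Rπ` is a commutative artinian ring, so the statement is one about a
commutative artinian ring `A`. Its prime spectrum is finite and discrete, so every maximal ideal
`𝔪` is cut out by an idempotent `e` (with `e ∉ 𝔪` and `e` in every other maximal ideal). An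
indecomposable `P` is killed by `e` or by `1 - e`; choosing `𝔪 ⊇ ann P` forces `1 - e ∈ ann P`,
whence `𝔪 = ann P + rad A` is the only maximal ideal containing `ann P`. Thus `A / ann P` is
local, `P` is a finitely generated projective, hence free, indecomposable module over it, so
`P ≅ A / ann P` and `P / rad(A) P ≅ A / 𝔪`. A simple subquotient of `P` is `A / 𝔫` with
`ann P ⊆ 𝔫`, so `𝔫 = 𝔪` as well.
-/

universe u

/-- A module is indecomposable if it is nonzero and is not the (internal) direct sum of two
nonzero submodules. -/
def IsIndecomposableModule (A : Type u) [Ring A] (M : Type u) [AddCommGroup M] [Module A M] :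
    Prop :=
  Nontrivial M ∧ ∀ N N' : Submodule A M, IsCompl N N' → N = ⊥ ∨ N' = ⊥

/-- The submodule `J·M` of a module `M`, where `J = rad A` is the Jacobson radical. -/
def radSMul (A : Type u) [Ring A] (M : Type u) [AddCommGroup M] [Module A M] :
    Submodule A M :=
  Submodule.span A {y | ∃ r ∈ Ideal.jacobson (⊥ : Ideal A), ∃ x : M, y = r • x}

open Ideal

lemma radSMul_eq_jacobson_smul_top (A : Type u) [CommRing A] (M : Type u) [AddCommGroup M]
    [Module A M] : radSMul A M = jacobson (⊥ : Ideal A) • (⊤ : Submodule A M) := by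
  refine le_antisymm ?_
    (Submodule.smul_le.mpr fun r hr x _ ↦ Submodule.subset_span ⟨r, hr, x, rfl⟩)
  rw [radSMul, Submodule.span_le]
  rintro _ ⟨r, hr, x, rfl⟩
  exact Submodule.smul_mem_smul hr Submodule.mem_top

lemma Ideal.IsMaximal.eq_of_eq_sup_jacobson {A : Type*} [Ring A] {I 𝔪 𝔫 : Ideal A}
    (h𝔪 : 𝔪.IsMaximal) (h𝔪I : 𝔪 = I ⊔ jacobson ⊥) (h𝔫 : 𝔫.IsMaximal) (hI𝔫 : I ≤ 𝔫) : 𝔫 = 𝔪 :=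
  (h𝔪.eq_of_le h𝔫.ne_top (h𝔪I ▸ sup_le hI𝔫 (sInf_le ⟨bot_le, h𝔫⟩))).symm

lemma Ideal.Quotient.isLocalRing_of_isMaximal_eq_sup_jacobson {A : Type*} [CommRing A]
    {I 𝔪 : Ideal A} (h𝔪 : 𝔪.IsMaximal) (h𝔪I : 𝔪 = I ⊔ jacobson ⊥) : IsLocalRing (A ⧸ I) := by
  have hcomap (K : Ideal (A ⧸ I)) (hK : K.IsMaximal) : K.comap (Quotient.mk I) = 𝔪 :=
    h𝔪.eq_of_eq_sup_jacobson h𝔪I (comap_isMaximal_of_surjective _ Quotient.mk_surjective)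
      fun x hx ↦ mem_comap.mpr (Quotient.eq_zero_iff_mem.mpr hx ▸ K.zero_mem)
  have : Nontrivial (A ⧸ I) :=
    Quotient.nontrivial_iff.mpr (ne_top_of_le_ne_top h𝔪.ne_top (h𝔪I ▸ le_sup_left))
  obtain ⟨K₀, hK₀⟩ := exists_maximal (A ⧸ I)
  exact .of_unique_max_ideal ⟨K₀, hK₀, fun K hK ↦ comap_injective_of_surjective _
    Quotient.mk_surjective ((hcomap K hK).trans (hcomap K₀ hK₀).symm)⟩

def Ideal.quotientSMulTopEquivQuotientSup {A : Type*} [CommRing A] (I J : Ideal A) :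
    ((A ⧸ I) ⧸ J • (⊤ : Submodule A (A ⧸ I))) ≃ₗ[A] A ⧸ I ⊔ J :=
  (Submodule.quotEquivOfEq _ _ (by
    rw [← Submodule.range_mkQ I, ← Submodule.map_top, ← Submodule.map_smul'', smul_eq_mul,
      mul_top])).symm.trans
    (Submodule.quotientQuotientEquivQuotientSup I J)

lemma IsArtinianRing.exists_isIdempotentElem_notMem_iff {A : Type*} [CommRing A]
    [IsArtinianRing A] (p₀ : Ideal A) [p₀.IsPrime] :
    ∃ e : A, IsIdempotentElem e ∧ ∀ p : Ideal A, p.IsPrime → (e ∉ p ↔ p = p₀) := by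
  obtain ⟨e, he, hbasic⟩ := PrimeSpectrum.isClopen_iff.mp
    (isClopen_discrete {(⟨p₀, inferInstance⟩ : PrimeSpectrum A)})
  refine ⟨e, he, fun p hp ↦ ?_⟩
  rw [← PrimeSpectrum.mem_basicOpen e ⟨p, hp⟩, ← SetLike.mem_coe, ← hbasic, Set.mem_singleton_iff,
    PrimeSpectrum.ext_iff]

lemma IsSimpleModule.nonempty_linearEquiv_quotient_of_annihilator_le {A : Type*} [CommRing A]
    {S : Type*} [AddCommGroup S] [Module A S] [IsSimpleModule A S] {I 𝔪 : Ideal A}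
    (h𝔪 : 𝔪.IsMaximal) (h𝔪I : 𝔪 = I ⊔ jacobson ⊥) (hI : I ≤ Module.annihilator A S) :
    Nonempty (S ≃ₗ[A] A ⧸ 𝔪) := by
  obtain ⟨𝔫, h𝔫, ⟨e⟩⟩ := isSimpleModule_iff_quot_maximal.mp ‹IsSimpleModule A S›
  rw [e.annihilator_eq, annihilator_quotient] at hI
  exact h𝔪.eq_of_eq_sup_jacobson h𝔪I h𝔫 hI ▸ ⟨e⟩

lemma Submodule.annihilator_le_annihilator_subquotient {A M : Type*} [CommRing A]
    [AddCommGroup M] [Module A M] (N' N : Submodule A M) :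
    Module.annihilator A M ≤ Module.annihilator A (N ⧸ N'.comap N.subtype) :=
  (N.subtype.annihilator_le_of_injective N.injective_subtype).trans
    ((N'.comap N.subtype).mkQ.annihilator_le_of_surjective (Submodule.mkQ_surjective _))

namespace IsIndecomposableModule

section Ring

variable {A : Type u} [Ring A] {M : Type u} [AddCommGroup M] [Module A M]

lemma of_isScalarTower {B : Type u} [Ring B] [Module B M] [SMul A B] [IsScalarTower A B M]
    (h : IsIndecomposableModule A M) : IsIndecomposableModule B M := by
  refine ⟨h.1, fun N N' hNN' ↦ ?_⟩
  simpa only [Submodule.restrictScalars_eq_bot_iff] using h.2 (N.restrictScalars A)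
    (N'.restrictScalars A) ((Submodule.isCompl_restrictScalars_iff A).mpr hNN')

lemma subsingleton_of_basis {ι : Type*} (h : IsIndecomposableModule A M)
    (b : Module.Basis ι A M) : Subsingleton ι := by
  have := h.1
  have : Nontrivial A := by
    by_contra hA
    rw [not_nontrivial_iff_subsingleton] at hA
    exact not_subsingleton M (Module.subsingleton A M)
  refine ⟨fun i j ↦ by_contra fun hij ↦ ?_⟩
  have hmem {k : ι} {s : Set ι} (hk : k ∈ s) : b k ∈ Submodule.span A (b '' s) :=
    Submodule.subset_span (Set.mem_image_of_mem b hk)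
  rcases h.2 _ _ (b.linearIndependent.isCompl_span_image b.span_eq isCompl_compl) with hi | hi
  · exact b.ne_zero i ((Submodule.mem_bot A).mp (hi ▸ hmem (Set.mem_singleton i)))
  · exact b.ne_zero j ((Submodule.mem_bot A).mp (hi ▸ hmem (s := {i}ᶜ) (Ne.symm hij)))

lemma nonempty_linearEquiv_of_free [Module.Free A M] (h : IsIndecomposableModule A M) :
    Nonempty (M ≃ₗ[A] A) := by
  let b := Module.Free.chooseBasis A M
  have := h.1
  have := h.subsingleton_of_basis b
  have := b.index_nonempty
  have := uniqueOfSubsingleton (Classical.arbitrary (Module.Free.ChooseBasisIndex A M))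
  exact ⟨b.equivFun.trans (LinearEquiv.funUnique _ A A)⟩

end Ring

section CommRing

variable {A : Type u} [CommRing A] {M : Type u} [AddCommGroup M] [Module A M]

lemma mem_annihilator_or_one_sub_mem_annihilator (h : IsIndecomposableModule A M) {e : A}
    (he : IsIdempotentElem e) :
    e ∈ Module.annihilator A M ∨ 1 - e ∈ Module.annihilator A M := by
  let f := Algebra.lsmul A A M e
  have hf : IsIdempotentElem f := he.map (Algebra.lsmul A A M)
  simp only [Module.mem_annihilator]
  refine (h.2 _ _ (LinearMap.IsIdempotentElem.isCompl hf)).imp (fun hrange x ↦ ?_) (fun hker x ↦ ?_)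
  · exact LinearMap.congr_fun (LinearMap.range_eq_bot.mp hrange) x
  · have : (1 - e) • x ∈ LinearMap.ker f := by
      simp [f, smul_smul, sub_mul, he.eq]
    rwa [hker, Submodule.mem_bot] at this

lemma nonempty_linearEquiv_of_isLocalRing [IsLocalRing A] [Module.Finite A M]
    [Module.Projective A M] (h : IsIndecomposableModule A M) : Nonempty (M ≃ₗ[A] A) :=
  have : Module.Free A M := Module.free_of_flat_of_isLocalRing
  h.nonempty_linearEquiv_of_free

variable [IsArtinianRing A]

lemma exists_isMaximal_eq_annihilator_sup_jacobson (h : IsIndecomposableModule A M) :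
    ∃ 𝔪 : Ideal A, 𝔪.IsMaximal ∧ 𝔪 = Module.annihilator A M ⊔ jacobson ⊥ := by
  have := h.1
  obtain ⟨𝔪, h𝔪, hann⟩ := exists_le_maximal _
    ((Module.annihilator_eq_top_iff (R := A)).not.mpr (not_subsingleton M))
  obtain ⟨e, he, hnotMem⟩ := IsArtinianRing.exists_isIdempotentElem_notMem_iff 𝔪
  have he𝔪 : e ∉ 𝔪 := (hnotMem 𝔪 h𝔪.isPrime).mpr rfl
  have h1e : 1 - e ∈ Module.annihilator A M :=
    (h.mem_annihilator_or_one_sub_mem_annihilator he).resolve_left fun h' ↦ he𝔪 (hann h')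
  refine ⟨𝔪, h𝔪, le_antisymm (fun a ha ↦ ?_) (sup_le hann (sInf_le ⟨bot_le, h𝔪⟩))⟩
  have hae : a * e ∈ jacobson ⊥ := by
    refine mem_sInf.mpr fun 𝔫 ⟨_, h𝔫⟩ ↦ ?_
    by_cases h𝔫𝔪 : 𝔫 = 𝔪
    · exact h𝔫𝔪 ▸ mul_mem_right e 𝔪 ha
    · exact mul_mem_left 𝔫 a (not_not.mp ((hnotMem 𝔫 h𝔫.isPrime).not.mpr h𝔫𝔪))
  rw [show a = a * (1 - e) + a * e by ring]
  exact add_mem (mem_sup_left (mul_mem_left _ a h1e)) (mem_sup_right hae)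

lemma nonempty_linearEquiv_quotient_annihilator [Module.Finite A M] [Module.Projective A M]
    (h : IsIndecomposableModule A M) : Nonempty (M ≃ₗ[A] A ⧸ Module.annihilator A M) := by
  obtain ⟨𝔪, h𝔪, h𝔪eq⟩ := h.exists_isMaximal_eq_annihilator_sup_jacobson
  let B := A ⧸ Module.annihilator A M
  let : Module B M := Module.quotientAnnihilator
  have : IsScalarTower A B M := (Module.isTorsionBySet_annihilator A M).isScalarTower
  have : IsLocalRing B := Quotient.isLocalRing_of_isMaximal_eq_sup_jacobson h𝔪 h𝔪eq
  have : Module.Finite B M := Module.Finite.of_restrictScalars_finite A B M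
  have : Module.Projective B M := Algebra.FormallyUnramified.projective_of_restrictScalars A B M
  obtain ⟨e⟩ := (h.of_isScalarTower (B := B)).nonempty_linearEquiv_of_isLocalRing
  exact ⟨e.restrictScalars A⟩

theorem nonempty_linearEquiv_quotient_radSMul [Module.Finite A M] [Module.Projective A M]
    (h : IsIndecomposableModule A M) (S : Type*) [AddCommGroup S] [Module A S]
    [IsSimpleModule A S] (hS : Module.annihilator A M ≤ Module.annihilator A S) :
    Nonempty (S ≃ₗ[A] M ⧸ radSMul A M) := by
  obtain ⟨𝔪, h𝔪, h𝔪eq⟩ := h.exists_isMaximal_eq_annihilator_sup_jacobson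
  obtain ⟨eS⟩ := IsSimpleModule.nonempty_linearEquiv_quotient_of_annihilator_le h𝔪 h𝔪eq hS
  obtain ⟨eM⟩ := h.nonempty_linearEquiv_quotient_annihilator
  have eTop : (M ⧸ radSMul A M) ≃ₗ[A] A ⧸ 𝔪 :=
    (Submodule.Quotient.equiv _ _ eM (by
      rw [radSMul_eq_jacobson_smul_top, Submodule.map_smul'', Submodule.map_top, eM.range])).trans
      (h𝔪eq ▸ quotientSMulTopEquivQuotientSup _ _)
  exact ⟨eS.trans eTop.symm⟩

end CommRing

end IsIndecomposableModule

theorem composition_factors_of_indecomposable_projective_cyclic_general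
    (R : Type u) [CommRing R] [IsArtinianRing R]
    (π : Type u) [Group π] [Finite π] [IsCyclic π]
    (P : Type u) [AddCommGroup P] [Module (MonoidAlgebra R π) P]
    [Module.Finite (MonoidAlgebra R π) P]
    (hproj : Module.Projective (MonoidAlgebra R π) P)
    (hindec : IsIndecomposableModule (MonoidAlgebra R π) P) :
    ∀ N' N : Submodule (MonoidAlgebra R π) P, N' ≤ N →
      IsSimpleModule (MonoidAlgebra R π) (↥N ⧸ Submodule.comap N.subtype N') →
      Nonempty ((↥N ⧸ Submodule.comap N.subtype N') ≃ₗ[MonoidAlgebra R π]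
        (P ⧸ radSMul (MonoidAlgebra R π) P)) := by
  intro N' N _ _
  let : CommGroup π := IsCyclic.commGroup
  let : CommRing (MonoidAlgebra R π) := MonoidAlgebra.commRing
  have : IsArtinianRing (MonoidAlgebra R π) := IsArtinianRing.of_finite R _
  exact hindec.nonempty_linearEquiv_quotient_radSMul _
    (Submodule.annihilator_le_annihilator_subquotient N' N)

theorem composition_factors_of_indecomposable_projective_cyclic
    (R : Type u) [CommRing R] [IsArtinianRing R] [IsLocalRing R]
    (π : Type u) [Group π] [Finite π] [IsCyclic π]
    (P : Type u) [AddCommGroup P] [Module (MonoidAlgebra R π) P]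
    [Module.Finite (MonoidAlgebra R π) P]
    (hproj : Module.Projective (MonoidAlgebra R π) P)
    (hindec : IsIndecomposableModule (MonoidAlgebra R π) P) :
    ∀ N' N : Submodule (MonoidAlgebra R π) P, N' ≤ N →
      IsSimpleModule (MonoidAlgebra R π) (↥N ⧸ Submodule.comap N.subtype N') →
      Nonempty ((↥N ⧸ Submodule.comap N.subtype N') ≃ₗ[MonoidAlgebra R π]
        (P ⧸ radSMul (MonoidAlgebra R π) P)) :=
  composition_factors_of_indecomposable_projective_cyclic_general R π P hproj hindec
end
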